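/- arXiv:2106.02798 — 5 statements merged into one kernel-verified Lean document; each statement's English description precedes it below -/
import Mathlib

section
/- Let V be a finite-dimensional real vector space with a nondegenerate symmetric bilinear form, and let φ : V → V be skew-symmetric with respect to it. Then the minimal polynomial P(x) of φ is either an even or an odd polynomial, i.e. P(−x) = ±P(x). -/
/-!
Skewness says that `-φ` is the adjoint of `φ`, so `p(φ)` and `p(-φ)` are adjoint for every
polynomial `p`; by nondegeneracy one vanishes iff the other does, hence `φ` and `-φ` have the same
minimal polynomial `P`. On the other hand the minimal polynomial of `-φ` is
`(-1)^(deg P) P(-x)`.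
-/

open Polynomial

theorem minpoly.eq_of_dvd_of_dvd {K A : Type*} [Field K] [Ring A] [Algebra K A] {x y : A}
    (hxy : minpoly K x ∣ minpoly K y) (hyx : minpoly K y ∣ minpoly K x) :
    minpoly K x = minpoly K y := by
  by_cases hy : IsIntegral K y
  · have hx : IsIntegral K x :=
      minpoly.ne_zero_iff.mp (ne_zero_of_dvd_ne_zero (minpoly.ne_zero hy) hxy)
    exact eq_of_monic_of_associated (minpoly.monic hx) (minpoly.monic hy)
      (associated_of_dvd_dvd hxy hyx)
  · rw [minpoly.eq_zero hy] at hyx ⊢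
    exact zero_dvd_iff.mp hyx

namespace LinearMap

section AdjointPair

variable {R M N : Type*} [CommSemiring R] [AddCommMonoid M] [Module R M]
  [AddCommMonoid N] [Module R N] {B : M →ₗ[R] M →ₗ[R] N} {f g : Module.End R M}

theorem IsAdjointPair.pow (h : IsAdjointPair B B f g) (n : ℕ) :
    IsAdjointPair B B ⇑(f ^ n) ⇑(g ^ n) := by
  induction n with
  | zero => exact isAdjointPair_one
  | succ n ih => rw [pow_succ, pow_succ']; exact ih.mul h

theorem IsAdjointPair.aeval (h : IsAdjointPair B B f g) (p : R[X]) :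
    IsAdjointPair B B ⇑(Polynomial.aeval f p) ⇑(Polynomial.aeval g p) := by
  induction p using Polynomial.induction_on' with
  | add p q hp hq => rw [map_add, map_add]; exact hp.add hq
  | monomial n a =>
    intro x y
    simp only [aeval_monomial, Module.End.mul_apply, Module.algebraMap_end_apply, map_smul,
      smul_apply, h.pow n x y]

end AdjointPair

theorem IsAdjointPair.minpoly_dvd {K M N : Type*} [Field K] [AddCommGroup M] [Module K M]
    [AddCommMonoid N] [Module K N] {B : M →ₗ[K] M →ₗ[K] N} {f g : Module.End K M}
    (hB : B.SeparatingRight) (h : IsAdjointPair B B f g) : minpoly K g ∣ minpoly K f := by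
  refine minpoly.dvd K g (LinearMap.ext fun y => hB _ fun x => ?_)
  rw [← h.aeval, minpoly.aeval]
  simp

theorem IsSkewAdjoint.minpoly_neg {K M N : Type*} [Field K] [AddCommGroup M] [Module K M]
    [AddCommGroup N] [Module K N] {B : M →ₗ[K] M →ₗ[K] N} {f : Module.End K M}
    (hB : B.SeparatingRight) (h : B.IsSkewAdjoint f) : minpoly K (-f) = minpoly K f := by
  have hneg : IsAdjointPair B B ⇑(-f) ⇑f := fun x y => by
    simpa [neg_eq_iff_eq_neg] using h x y
  exact minpoly.eq_of_dvd_of_dvd (h.minpoly_dvd hB) (hneg.minpoly_dvd hB)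

end LinearMap

theorem minpoly_even_or_odd_of_skew_general
    (V : Type*) [AddCommGroup V] [Module ℝ V]
    (B : LinearMap.BilinForm ℝ V) (hBnd : B.Nondegenerate)
    (φ : Module.End ℝ V) (hskew : ∀ x y, B (φ x) y + B x (φ y) = 0) :
    (minpoly ℝ φ).comp (-X) = minpoly ℝ φ ∨ (minpoly ℝ φ).comp (-X) = -(minpoly ℝ φ) := by
  have hφ : LinearMap.IsSkewAdjoint B φ := fun x y => by
    simpa [eq_neg_iff_add_eq_zero] using hskew x y
  have h := minpoly.neg (A := ℝ) φ
  rw [hφ.minpoly_neg hBnd.2] at h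
  rcases neg_one_pow_eq_or ℝ[X] (minpoly ℝ φ).natDegree with hsign | hsign
  · left; rw [hsign, one_mul] at h; exact h.symm
  · right; rw [hsign, neg_one_mul] at h; exact neg_eq_iff_eq_neg.mp h.symm

/-- The minimal polynomial of a skew-symmetric endomorphism of a
finite-dimensional real vector space with a nondegenerate symmetric bilinear form is
either even or odd: `P(-x) = P(x)` or `P(-x) = -P(x)`. -/
theorem minpoly_even_or_odd_of_skew
    (V : Type*) [AddCommGroup V] [Module ℝ V] [FiniteDimensional ℝ V]
    (B : LinearMap.BilinForm ℝ V) (hBnd : B.Nondegenerate) (hBsymm : ∀ x y, B x y = B y x)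
    (φ : Module.End ℝ V) (hskew : ∀ x y, B (φ x) y + B x (φ y) = 0) :
    (minpoly ℝ φ).comp (-X) = minpoly ℝ φ ∨ (minpoly ℝ φ).comp (-X) = -(minpoly ℝ φ) :=
  minpoly_even_or_odd_of_skew_general V B hBnd φ hskew
end

section
/- Let V be a finite-dimensional complex vector space with a nondegenerate symmetric bilinear form ⟨·,·⟩ and let φ be a skew-symmetric endomorphism of V. For an eigenvalue λ of φ, let L_λ = Ker((φ − λI)^n) (n = dim V) denote the generalized eigenspace. Then the orthogonal complement of L_λ with respect to the form equals the direct sum of all generalized eigenspaces L_μ with μ ≠ −λ. -/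
/-!
If `f` and `g` are adjoint, then `B((f - a)x, y) = B(x, (g - b)y) + (b - a) B(x, y)`, so induction
on the nilpotency exponents shows that the generalized eigenspaces of `f` at `a` and of `g` at `b`
are orthogonal when `a ≠ b`. For skew `φ` (`g = -φ`) this gives `L_a ⊥ L_b` whenever `a + b ≠ 0`,
hence `L_μ ⊆ L_λ^⊥` for `μ ≠ -λ`. Conversely, since `V` is the sum of the `L_μ`, write `x ∈ L_λ^⊥`
as `y + z` with `y ∈ L_{-λ}` and `z` in the sum of the other `L_μ`. Then `y = x - z ⊥ L_λ`, while
`y ⊥ L_μ` for `μ ≠ λ` by the first step; so `y` is orthogonal to all of `V`, and `y = 0`.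
-/

open Module End

theorem Module.End.maxGenEigenspace_neg {R M : Type*} [CommRing R] [AddCommGroup M]
    [Module R M] (f : End R M) (μ : R) :
    (-f).maxGenEigenspace (-μ) = f.maxGenEigenspace μ := by
  ext x
  have h : -f - (-μ) • 1 = -(f - μ • 1) := by module
  simp only [mem_maxGenEigenspace, h]
  refine exists_congr fun k => ?_
  rw [neg_pow, mul_apply]
  rcases neg_one_pow_eq_or (End R M) k with h | h <;> simp [h]

namespace LinearMap.IsAdjointPair

variable {K M : Type*} [Field K] [AddCommGroup M] [Module K M]
  {B : LinearMap.BilinForm K M} {f g : End K M}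

theorem apply_sub_smul_one (h : IsAdjointPair B B f g) (a b : K) (x y : M) :
    B ((f - a • 1) x) y = B x ((g - b • 1) y) + (b - a) * B x y := by
  simp only [sub_apply, smul_apply, one_apply, map_sub, map_smul, LinearMap.sub_apply,
    LinearMap.smul_apply, smul_eq_mul, h x y]
  ring

theorem apply_eq_zero_of_pow_sub_smul_one_apply_eq_zero (h : IsAdjointPair B B f g) {a b : K}
    (hab : a ≠ b) (k : ℕ) (x : M) (hx : ((f - a • 1) ^ k) x = 0) (l : ℕ) (y : M)
    (hy : ((g - b • 1) ^ l) y = 0) : B x y = 0 := by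
  induction k generalizing x l y with
  | zero => simp_all
  | succ k ihk =>
    induction l generalizing y with
    | zero => simp_all
    | succ l ihl =>
      have hfx : B ((f - a • 1) x) y = 0 := ihk _ (by rwa [pow_succ, mul_apply] at hx) _ _ hy
      have hgy : B x ((g - b • 1) y) = 0 := ihl _ (by rwa [pow_succ, mul_apply] at hy)
      have key := h.apply_sub_smul_one a b x y
      rw [hfx, hgy, zero_add, eq_comm, mul_eq_zero] at key
      exact key.resolve_left (sub_ne_zero.2 hab.symm)

theorem apply_eq_zero_of_mem_maxGenEigenspace (h : IsAdjointPair B B f g) {a b : K} (hab : a ≠ b)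
    {x y : M} (hx : x ∈ f.maxGenEigenspace a) (hy : y ∈ g.maxGenEigenspace b) : B x y = 0 := by
  obtain ⟨k, hk⟩ := (mem_maxGenEigenspace _ _ _).1 hx
  obtain ⟨l, hl⟩ := (mem_maxGenEigenspace _ _ _).1 hy
  exact h.apply_eq_zero_of_pow_sub_smul_one_apply_eq_zero hab k x hk l y hl

theorem apply_eq_zero_of_mem_maxGenEigenspace_of_add_ne_zero (h : IsAdjointPair B B f (-f))
    {a b : K} (hab : a + b ≠ 0) {x y : M} (hx : x ∈ f.maxGenEigenspace a)
    (hy : y ∈ f.maxGenEigenspace b) : B x y = 0 :=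
  h.apply_eq_zero_of_mem_maxGenEigenspace (b := -b) (fun h => hab (by rw [h, neg_add_cancel])) hx
    (by rwa [maxGenEigenspace_neg])

theorem orthogonal_maxGenEigenspace [IsAlgClosed K] [FiniteDimensional K M]
    (hB : B.SeparatingRight) (h : IsAdjointPair B B f (-f)) (a : K) :
    B.orthogonal (f.maxGenEigenspace a) = ⨆ μ ∈ {μ : K | μ ≠ -a}, f.maxGenEigenspace μ := by
  have hle : ⨆ μ ∈ {μ : K | μ ≠ -a}, f.maxGenEigenspace μ ≤ B.orthogonal (f.maxGenEigenspace a) :=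
    iSup₂_le fun μ hμ y hy x hx => h.apply_eq_zero_of_mem_maxGenEigenspace_of_add_ne_zero
      (fun h => hμ (by linear_combination h)) hx hy
  refine le_antisymm (fun x hx => ?_) hle
  have htop := iSup_maxGenEigenspace_eq_top f
  rw [iSup_split_single _ (-a)] at htop
  obtain ⟨y, hy, z, hz, rfl⟩ := Submodule.mem_sup.1 (htop ▸ Submodule.mem_top : x ∈ _)
  suffices y = 0 by simpa [this] using hz
  have hy_orth : y ∈ B.orthogonal (f.maxGenEigenspace a) := by
    simpa using sub_mem hx (hle hz)
  have hker : ⨆ μ, f.maxGenEigenspace μ ≤ LinearMap.ker (B.flip y) := iSup_le fun μ w hw => by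
    by_cases hμ : μ = a
    · subst hμ; exact hy_orth w hw
    · exact h.apply_eq_zero_of_mem_maxGenEigenspace_of_add_ne_zero
        (fun h => hμ (by linear_combination h)) hw hy
  exact hB y fun v => hker (by simp [iSup_maxGenEigenspace_eq_top])

end LinearMap.IsAdjointPair

theorem orthogonal_genEigenspace_of_skew_general
    (V : Type*) [AddCommGroup V] [Module ℂ V] [FiniteDimensional ℂ V]
    (B : LinearMap.BilinForm ℂ V) (hBnd : B.Nondegenerate)
    (φ : Module.End ℂ V) (hskew : ∀ x y, B (φ x) y + B x (φ y) = 0)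
    (L : ℂ → Submodule ℂ V)
    (hL : ∀ μ : ℂ, L μ = LinearMap.ker ((φ - μ • 1) ^ (Module.finrank ℂ V)))
    (lam : ℂ) :
    B.orthogonal (L lam) = ⨆ μ ∈ {μ : ℂ | μ ≠ -lam}, L μ := by
  obtain rfl : L = φ.maxGenEigenspace := funext fun μ => by
    rw [hL, maxGenEigenspace_eq_genEigenspace_finrank, genEigenspace_nat]
  have hφ : LinearMap.IsAdjointPair B B φ (-φ) := fun x y => by
    simpa [eq_neg_iff_add_eq_zero] using hskew x y
  exact hφ.orthogonal_maxGenEigenspace hBnd.2 lam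

/-- For a skew-symmetric endomorphism `φ` of a finite-dimensional complex
vector space with a nondegenerate symmetric bilinear form, the orthogonal complement of
the generalized eigenspace `L_λ` equals the (direct) sum of all generalized eigenspaces
`L_μ` with `μ ≠ -λ`. -/
theorem orthogonal_genEigenspace_of_skew
    (V : Type*) [AddCommGroup V] [Module ℂ V] [FiniteDimensional ℂ V]
    (B : LinearMap.BilinForm ℂ V) (hBnd : B.Nondegenerate) (hBsymm : ∀ x y, B x y = B y x)
    (φ : Module.End ℂ V) (hskew : ∀ x y, B (φ x) y + B x (φ y) = 0)
    (L : ℂ → Submodule ℂ V)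
    (hL : ∀ μ : ℂ, L μ = LinearMap.ker ((φ - μ • 1) ^ (Module.finrank ℂ V)))
    (lam : ℂ) (hlam : Module.End.HasEigenvalue φ lam) :
    B.orthogonal (L lam) = ⨆ μ ∈ {μ : ℂ | μ ≠ -lam}, L μ :=
  orthogonal_genEigenspace_of_skew_general V B hBnd φ hskew L hL lam
end

section
/- Let V be a finite-dimensional complex vector space with a nondegenerate symmetric bilinear form and φ a skew-symmetric endomorphism. For any nonzero eigenvalue λ of φ, the restriction of the bilinear form to E_λ = L_λ ⊕ L_{−λ} is nondegenerate. -/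
/-!
Skewness gives `B ((φ - μ) x) y + B x ((φ - ν) y) = -(μ + ν) * B x y`, so by induction on the
nilpotency orders, generalized eigenvectors for `μ` and `ν` are `B`-orthogonal unless
`μ + ν = 0`. As `V` is the sum of the generalized eigenspaces, a vector of `E_λ` orthogonal to
`E_λ` is then orthogonal to all of `V`, hence zero. The transpose of `B` is skew for `φ` as well,
which gives the other side of nondegeneracy.
-/

namespace LinearMap.BilinForm

open Module.End

section Skew

variable {R M : Type*} [CommRing R] [AddCommGroup M] [Module R M]
  {B : LinearMap.BilinForm R M} {φ : Module.End R M}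

lemma apply_sub_smul_add_apply_sub_smul (hφ : ∀ x y, B (φ x) y + B x (φ y) = 0) (μ ν : R)
    (x y : M) : B ((φ - μ • 1) x) y + B x ((φ - ν • 1) y) = -(μ + ν) * B x y := by
  simp only [LinearMap.sub_apply, LinearMap.smul_apply, one_apply, map_sub, map_smul, smul_eq_mul]
  linear_combination hφ x y

variable [NoZeroDivisors R]

lemma apply_eq_zero_of_pow_sub_smul_apply_eq_zero (hφ : ∀ x y, B (φ x) y + B x (φ y) = 0)
    {μ ν : R} (hμν : μ + ν ≠ 0) :
    ∀ {n m : ℕ} {x y : M}, ((φ - μ • 1) ^ n) x = 0 → ((φ - ν • 1) ^ m) y = 0 → B x y = 0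
  | 0, _, _, _, hx, _ => by simp_all
  | _, 0, _, _, _, hy => by simp_all
  | n + 1, m + 1, x, y, hx, hy => by
    rw [pow_succ, mul_apply] at hx hy
    have h₁ : B ((φ - μ • 1) x) y = 0 :=
      apply_eq_zero_of_pow_sub_smul_apply_eq_zero hφ hμν hx (by rwa [pow_succ, mul_apply])
    have h₂ : B x ((φ - ν • 1) y) = 0 :=
      apply_eq_zero_of_pow_sub_smul_apply_eq_zero hφ hμν (by rwa [pow_succ, mul_apply]) hy
    have h := apply_sub_smul_add_apply_sub_smul hφ μ ν x y
    rw [h₁, h₂, zero_add, eq_comm, mul_eq_zero] at h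
    exact h.resolve_left (neg_ne_zero.mpr hμν)

lemma apply_eq_zero_of_mem_maxGenEigenspace (hφ : ∀ x y, B (φ x) y + B x (φ y) = 0)
    {μ ν : R} (hμν : μ + ν ≠ 0) {x y : M} (hx : x ∈ φ.maxGenEigenspace μ)
    (hy : y ∈ φ.maxGenEigenspace ν) : B x y = 0 := by
  obtain ⟨n, hx⟩ := (mem_maxGenEigenspace φ μ x).mp hx
  obtain ⟨m, hy⟩ := (mem_maxGenEigenspace φ ν y).mp hy
  exact apply_eq_zero_of_pow_sub_smul_apply_eq_zero hφ hμν hx hy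

end Skew

section AlgClosed

variable {K V : Type*} [Field K] [IsAlgClosed K] [AddCommGroup V] [Module K V]
  [FiniteDimensional K V] {B : LinearMap.BilinForm K V} {φ : Module.End K V}

lemma apply_eq_zero_of_forall_mem_sup_maxGenEigenspace (hφ : ∀ x y, B (φ x) y + B x (φ y) = 0)
    {lam : K} {x : V} (hx : x ∈ φ.maxGenEigenspace lam ⊔ φ.maxGenEigenspace (-lam))
    (h : ∀ w ∈ φ.maxGenEigenspace lam ⊔ φ.maxGenEigenspace (-lam), B x w = 0) (z : V) :
    B x z = 0 := by
  have hz : z ∈ ⨆ μ, φ.maxGenEigenspace μ := φ.iSup_maxGenEigenspace_eq_top ▸ Submodule.mem_top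
  induction hz using Submodule.iSup_induction' with
  | mem μ z hz =>
    by_cases hμ : μ = lam ∨ μ = -lam
    · rcases hμ with rfl | rfl
      exacts [h z (Submodule.mem_sup_left hz), h z (Submodule.mem_sup_right hz)]
    · push Not at hμ
      obtain ⟨a, ha, b, hb, rfl⟩ := Submodule.mem_sup.mp hx
      rw [map_add, LinearMap.add_apply,
        apply_eq_zero_of_mem_maxGenEigenspace hφ (by grind) ha hz,
        apply_eq_zero_of_mem_maxGenEigenspace hφ (by grind) hb hz, add_zero]
  | zero => exact map_zero _
  | add z₁ z₂ _ _ h₁ h₂ => rw [map_add, h₁, h₂, add_zero]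

lemma separatingLeft_restrict_sup_maxGenEigenspace (hB : B.SeparatingLeft)
    (hφ : ∀ x y, B (φ x) y + B x (φ y) = 0) (lam : K) :
    (B.restrict (φ.maxGenEigenspace lam ⊔ φ.maxGenEigenspace (-lam))).SeparatingLeft :=
  fun ⟨x, hx⟩ h ↦ Subtype.ext <| hB x <|
    apply_eq_zero_of_forall_mem_sup_maxGenEigenspace hφ hx fun w hw ↦ h ⟨w, hw⟩

end AlgClosed

end LinearMap.BilinForm

open LinearMap LinearMap.BilinForm Module.End in
theorem restrict_nondegenerate_on_Elambda_general
    (V : Type*) [AddCommGroup V] [Module ℂ V] [FiniteDimensional ℂ V]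
    (B : LinearMap.BilinForm ℂ V) (hBnd : B.Nondegenerate)
    (φ : Module.End ℂ V) (hskew : ∀ x y, B (φ x) y + B x (φ y) = 0)
    (L : ℂ → Submodule ℂ V)
    (hL : ∀ μ : ℂ, L μ = LinearMap.ker ((φ - μ • 1) ^ (Module.finrank ℂ V)))
    (lam : ℂ) :
    (B.restrict (L lam ⊔ L (-lam))).Nondegenerate := by
  have hLmax (μ : ℂ) : L μ = φ.maxGenEigenspace μ := by
    rw [hL, maxGenEigenspace_eq_genEigenspace_finrank, genEigenspace_nat]
  have hskew_flip : ∀ x y, B.flip (φ x) y + B.flip x (φ y) = 0 := fun x y ↦ by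
    rw [add_comm]; exact hskew y x
  rw [hLmax, hLmax]
  exact ⟨separatingLeft_restrict_sup_maxGenEigenspace hBnd.1 hskew lam,
    flip_separatingLeft.mp <|
      separatingLeft_restrict_sup_maxGenEigenspace (flip_separatingLeft.mpr hBnd.2) hskew_flip lam⟩

/-- For a skew-symmetric endomorphism of a finite-dimensional complex vector
space with a nondegenerate symmetric bilinear form, and any nonzero eigenvalue `λ`, the
restriction of the form to `E_λ = L_λ ⊕ L_{-λ}` is nondegenerate. -/
theorem restrict_nondegenerate_on_Elambda
    (V : Type*) [AddCommGroup V] [Module ℂ V] [FiniteDimensional ℂ V]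
    (B : LinearMap.BilinForm ℂ V) (hBnd : B.Nondegenerate) (hBsymm : ∀ x y, B x y = B y x)
    (φ : Module.End ℂ V) (hskew : ∀ x y, B (φ x) y + B x (φ y) = 0)
    (L : ℂ → Submodule ℂ V)
    (hL : ∀ μ : ℂ, L μ = LinearMap.ker ((φ - μ • 1) ^ (Module.finrank ℂ V)))
    (lam : ℂ) (hlam : Module.End.HasEigenvalue φ lam) (hne : lam ≠ 0) :
    (B.restrict (L lam ⊔ L (-lam))).Nondegenerate :=
  restrict_nondegenerate_on_Elambda_general V B hBnd φ hskew L hL lam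
end

section
/- Let V be a vector space, B : V × V → V bilinear, and φ : V → V a semisimple linear operator. Define the torsion T_φ(x,y) = φ²B(x,y) + B(φx,φy) − φ(B(φx,y)+B(x,φy)) and the shifted torsion S_φ(x,y) = T_φ(φx,y) + T_φ(x,φy). Then for eigenvectors x ∈ L_μ, y ∈ L_ν one has S_φ(x,y) = (μ+ν)(φ−μI)(φ−νI)(B(x,y)). Consequently S_φ ≡ 0 if and only if (μ+ν)B(L_μ,L_ν) ⊆ L_μ + L_ν for all eigenvalues μ, ν. -/
/-- The (Courant–)Nijenhuis torsion of a linear operator `φ` relative to a bilinear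
bracket `B`. -/
def CNtorsion {K V : Type*} [Field K] [AddCommGroup V] [Module K V]
    (φ : Module.End K V) (B : V →ₗ[K] V →ₗ[K] V) : V → V → V :=
  fun x y => φ (φ (B x y)) + B (φ x) (φ y) - φ (B (φ x) y + B x (φ y))

/-- The shifted (Courant–)Nijenhuis torsion `S(x,y) = T(φx,y) + T(x,φy)`. -/
def CNshifted {K V : Type*} [Field K] [AddCommGroup V] [Module K V]
    (φ : Module.End K V) (B : V →ₗ[K] V →ₗ[K] V) : V → V → V :=
  fun x y => CNtorsion φ B (φ x) y + CNtorsion φ B x (φ y)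

/-!
On eigenvectors `x ∈ L_μ`, `y ∈ L_ν` every term of `S_φ(x, y)` is a polynomial in `φ` applied to
`B(x, y)`, and the sum collapses to `(μ + ν)(φ - μ)(φ - ν) B(x, y)`. For semisimple `φ` the kernel
of `(φ - μ)(φ - ν)` is exactly `L_μ + L_ν`: by coprimality of `X - μ` and `X - ν` when `μ ≠ ν`,
and because `φ - μ` has no nilpotent part when `μ = ν`. As `S_φ` is bilinear and the eigenspaces
span `V`, it vanishes identically iff it vanishes on every pair of eigenspaces.
-/

theorem LinearMap.eq_zero_of_forall_mem_of_iSup_eq_top {R M N P ι κ : Type*} [CommSemiring R]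
    [AddCommMonoid M] [AddCommMonoid N] [AddCommMonoid P] [Module R M] [Module R N] [Module R P]
    {p : ι → Submodule R M} {q : κ → Submodule R N} (hp : ⨆ i, p i = ⊤) (hq : ⨆ j, q j = ⊤)
    {f : M →ₗ[R] N →ₗ[R] P} (hf : ∀ i j, ∀ x ∈ p i, ∀ y ∈ q j, f x y = 0) : f = 0 := by
  rw [Submodule.iSup_eq_span] at hp hq
  refine LinearMap.ext_on hp fun x hx ↦ LinearMap.ext_on hq fun y hy ↦ ?_
  obtain ⟨i, hx⟩ := Set.mem_iUnion.mp hx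
  obtain ⟨j, hy⟩ := Set.mem_iUnion.mp hy
  exact hf i j x hx y hy

namespace Module.End

variable {K V : Type*} [Field K] [AddCommGroup V] [Module K V] {φ : Module.End K V}

theorem aeval_X_sub_C_eq (μ : K) :
    Polynomial.aeval φ (Polynomial.X - Polynomial.C μ) = φ - μ • 1 := by
  rw [map_sub, Polynomial.aeval_X, Polynomial.aeval_C, Algebra.algebraMap_eq_smul_one]

theorem IsFinitelySemisimple.ker_mul_eq_eigenspace_sup (hφ : φ.IsFinitelySemisimple) (μ ν : K) :
    LinearMap.ker ((φ - μ • 1) * (φ - ν • 1)) = φ.eigenspace μ ⊔ φ.eigenspace ν := by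
  rcases eq_or_ne μ ν with rfl | hμν
  · rw [sup_idem, ← hφ.genEigenspace_eq_eigenspace μ (k := (2 : ℕ)) (by norm_num),
      genEigenspace_nat, pow_two]
  · rw [eigenspace_def, eigenspace_def, ← aeval_X_sub_C_eq, ← aeval_X_sub_C_eq, ← map_mul,
      Polynomial.sup_ker_aeval_eq_ker_aeval_mul_of_coprime]
    exact Polynomial.isCoprime_X_sub_C_of_isUnit_sub (sub_ne_zero.mpr hμν).isUnit

end Module.End

section ShiftedTorsion

variable {K V : Type*} [Field K] [AddCommGroup V] [Module K V]
  (φ : Module.End K V) (B : V →ₗ[K] V →ₗ[K] V)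

def CNshiftedBilin : V →ₗ[K] V →ₗ[K] V :=
  LinearMap.mk₂ K (CNshifted φ B)
    (fun x x' y ↦ by simp only [CNshifted, CNtorsion, map_add, LinearMap.add_apply]; abel)
    (fun c x y ↦ by
      simp only [CNshifted, CNtorsion, map_add, map_smul, LinearMap.smul_apply]; module)
    (fun x y y' ↦ by simp only [CNshifted, CNtorsion, map_add]; abel)
    (fun c x y ↦ by simp only [CNshifted, CNtorsion, map_add, map_smul]; module)

@[simp]
theorem CNshiftedBilin_apply (x y : V) : CNshiftedBilin φ B x y = CNshifted φ B x y := rfl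

theorem CNshifted_eq_of_eigenvectors {μ ν : K} {x y : V} (hx : φ x = μ • x) (hy : φ y = ν • y) :
    CNshifted φ B x y = (μ + ν) • (((φ - μ • 1) * (φ - ν • 1)) (B x y)) := by
  simp only [CNshifted, CNtorsion, hx, hy, map_smul, LinearMap.smul_apply, map_add,
    Module.End.mul_apply, LinearMap.sub_apply, Module.End.one_apply, map_sub]
  module

end ShiftedTorsion

/-- For a semisimple operator `φ` and eigenvectors `x ∈ L_μ`, `y ∈ L_ν`,
the shifted torsion satisfies `S(x,y) = (μ+ν)(φ-μI)(φ-νI)(B(x,y))`; consequently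
`S ≡ 0` iff `(μ+ν)·B(L_μ, L_ν) ⊆ L_μ + L_ν` for all eigenvalues `μ, ν`. -/
theorem shifted_torsion_semisimple
    (V : Type*) [AddCommGroup V] [Module ℂ V] [FiniteDimensional ℂ V]
    (B : V →ₗ[ℂ] V →ₗ[ℂ] V) (φ : Module.End ℂ V) (hφ : φ.IsSemisimple) :
    (∀ (μ ν : ℂ) (x y : V), φ x = μ • x → φ y = ν • y →
        CNshifted φ B x y = (μ + ν) • (((φ - μ • 1) * (φ - ν • 1)) (B x y))) ∧
    ((∀ x y : V, CNshifted φ B x y = 0) ↔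
      ∀ μ ν : ℂ, ∀ x ∈ Module.End.eigenspace φ μ, ∀ y ∈ Module.End.eigenspace φ ν,
        (μ + ν) • B x y ∈ Module.End.eigenspace φ μ ⊔ Module.End.eigenspace φ ν) := by
  have formula (μ ν : ℂ) (x y : V) (hx : φ x = μ • x) (hy : φ y = ν • y) :=
    CNshifted_eq_of_eigenvectors φ B hx hy
  have vanishing_iff (μ ν : ℂ) (x : V) (hx : x ∈ φ.eigenspace μ) (y : V)
      (hy : y ∈ φ.eigenspace ν) :
      CNshifted φ B x y = 0 ↔ (μ + ν) • B x y ∈ φ.eigenspace μ ⊔ φ.eigenspace ν := by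
    rw [← hφ.isFinitelySemisimple.ker_mul_eq_eigenspace_sup, LinearMap.mem_ker, map_smul,
      formula μ ν x y (Module.End.mem_eigenspace_iff.mp hx) (Module.End.mem_eigenspace_iff.mp hy)]
  refine ⟨formula, fun h μ ν x hx y hy ↦ (vanishing_iff μ ν x hx y hy).mp (h x y), fun h x y ↦ ?_⟩
  have hS : CNshiftedBilin φ B = 0 :=
    LinearMap.eq_zero_of_forall_mem_of_iSup_eq_top hφ.iSup_eigenspace_eq_top
      hφ.iSup_eigenspace_eq_top
      fun μ ν x hx y hy ↦ (vanishing_iff μ ν x hx y hy).mpr (h μ ν x hx y hy)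
  simpa using LinearMap.congr_fun₂ hS x y
end

section
/- Let R be a commutative ring containing 1/2, and u, v, w elements of a commutative R-algebra. Setting z = 2u − v − w and t = u² − u(v+w) + vw, one has for every n ≥ 1: (u−v−w)^{2n} + u^{2n} − v^{2n} − w^{2n} = Σ_{m=1}^{n} 2^{2m−2n+1} t^m Σ_{k=m}^{n} C(2n,2k) C(k,m) (v−w)^{2k−2m} (v+w)^{2n−2k}. -/
open Finset

/-- Sum over a range of odd length of a function vanishing at odd indices. -/
lemma mte_sum_even {A : Type*} [AddCommMonoid A] (f : ℕ → A)
    (hf : ∀ j, ¬ Even j → f j = 0) (n : ℕ) :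
    ∑ j ∈ range (2 * n + 1), f j = ∑ k ∈ range (n + 1), f (2 * k) := by
  induction n with
  | zero => simp
  | succ n ih =>
    have h1 : 2 * (n + 1) + 1 = (2 * n + 1) + 1 + 1 := by ring
    rw [h1, sum_range_succ, sum_range_succ, ih,
      hf (2 * n + 1) (by simp [Nat.even_add_one]), add_zero]
    have h3 : 2 * n + 1 + 1 = 2 * (n + 1) := by ring
    rw [h3]
    exact (sum_range_succ (fun k => f (2 * k)) (n + 1)).symm

/-- Even-power binomial identity. -/
lemma mte_even_pow {A : Type*} [CommRing A] (x y : A) (n : ℕ) :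
    (y + x) ^ (2 * n) + (y - x) ^ (2 * n) =
      2 * ∑ k ∈ range (n + 1),
        ((2 * n).choose (2 * k) : A) * x ^ (2 * k) * y ^ (2 * n - 2 * k) := by
  have h1 : (y + x) ^ (2 * n)
      = ∑ j ∈ range (2 * n + 1), x ^ j * y ^ (2 * n - j) * ((2 * n).choose j : A) := by
    rw [add_comm y x, add_pow]
  have h2 : (y - x) ^ (2 * n)
      = ∑ j ∈ range (2 * n + 1), (-1 : A) ^ j * (x ^ j * y ^ (2 * n - j) * ((2 * n).choose j : A)) := by
    rw [sub_eq_add_neg, add_comm y (-x), add_pow]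
    refine sum_congr rfl fun j _ => ?_
    rw [neg_pow]; ring
  rw [h1, h2, ← sum_add_distrib]
  have h3 : ∀ j ∈ range (2 * n + 1), (x ^ j * y ^ (2 * n - j) * ((2 * n).choose j : A)
      + (-1 : A) ^ j * (x ^ j * y ^ (2 * n - j) * ((2 * n).choose j : A)))
      = (1 + (-1 : A) ^ j) * (x ^ j * y ^ (2 * n - j) * ((2 * n).choose j : A)) := by
    intro j _; ring
  rw [sum_congr rfl h3]
  have hvanish : ∀ j, ¬ Even j →
      (1 + (-1 : A) ^ j) * (x ^ j * y ^ (2 * n - j) * ((2 * n).choose j : A)) = 0 := by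
    intro j hj
    rw [(Nat.not_even_iff_odd.mp hj).neg_one_pow]; ring
  rw [mte_sum_even _ hvanish n, mul_sum]
  refine sum_congr rfl fun k _ => ?_
  rw [Even.neg_one_pow ⟨k, by ring⟩]
  ring

/-- With `t = u² - u(v+w) + vw`, in a commutative algebra (over a
commutative ring containing `1/2`) one has, for every `n ≥ 1`,
`(u-v-w)^{2n} + u^{2n} - v^{2n} - w^{2n}
   = Σ_{m=1}^{n} 2^{2m-2n+1} t^m Σ_{k=m}^{n} C(2n,2k) C(k,m) (v-w)^{2k-2m} (v+w)^{2n-2k}`,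
where `2^{2m-2n+1}` is written as `2 · (⅟2)^{2(n-m)}`. -/
theorem minimal_torsion_expansion_identity
    (R : Type*) [CommRing R] [Invertible (2 : R)]
    (A : Type*) [CommRing A] [Algebra R A] [Invertible (2 : A)]
    (u v w : A) (n : ℕ) (hn : 1 ≤ n) :
    (u - v - w) ^ (2 * n) + u ^ (2 * n) - v ^ (2 * n) - w ^ (2 * n) =
      ∑ m ∈ Finset.Icc 1 n,
        (2 * (⅟(2 : A)) ^ (2 * (n - m))) * (u ^ 2 - u * (v + w) + v * w) ^ m *
          ∑ k ∈ Finset.Icc m n,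
            ((2 * n).choose (2 * k) : A) * (k.choose m : A) *
              (v - w) ^ (2 * k - 2 * m) * (v + w) ^ (2 * n - 2 * k) := by
  set t : A := u ^ 2 - u * (v + w) + v * w with ht
  set z : A := 2 * u - v - w with hz
  have hcancel : ∀ a b : A, (2 : A) ^ (2 * n) * a = (2 : A) ^ (2 * n) * b → a = b := by
    intro a b h
    have h1 : (⅟(2 : A)) ^ (2 * n) * ((2 : A) ^ (2 * n) * a)
        = (⅟(2 : A)) ^ (2 * n) * ((2 : A) ^ (2 * n) * b) := by rw [h]
    rwa [← mul_assoc, ← mul_assoc, ← mul_pow, invOf_mul_self, one_pow, one_mul, one_mul] at h1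
  apply hcancel
  have key1 : (2 : A) ^ (2 * n) * ((u - v - w) ^ (2 * n) + u ^ (2 * n)) =
      2 * ∑ k ∈ range (n + 1),
        ((2 * n).choose (2 * k) : A) * z ^ (2 * k) * (v + w) ^ (2 * n - 2 * k) := by
    have h := mte_even_pow z (-(v + w)) n
    have e1 : -(v + w) + z = 2 * (u - v - w) := by rw [hz]; ring
    have e2 : -(v + w) - z = -(2 * u) := by rw [hz]; ring
    rw [e1, e2, Even.neg_pow (even_two_mul n)] at h
    calc (2 : A) ^ (2 * n) * ((u - v - w) ^ (2 * n) + u ^ (2 * n))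
        = (2 * (u - v - w)) ^ (2 * n) + (2 * u) ^ (2 * n) := by
          rw [mul_pow, mul_pow]; ring
      _ = 2 * ∑ k ∈ range (n + 1),
            ((2 * n).choose (2 * k) : A) * z ^ (2 * k) * (-(v + w)) ^ (2 * n - 2 * k) := h
      _ = _ := by
          congr 1
          refine sum_congr rfl fun k _ => ?_
          rw [Even.neg_pow ⟨n - k, by omega⟩]
  have key2 : (2 : A) ^ (2 * n) * (v ^ (2 * n) + w ^ (2 * n)) =
      2 * ∑ k ∈ range (n + 1),
        ((2 * n).choose (2 * k) : A) * (v - w) ^ (2 * k) * (v + w) ^ (2 * n - 2 * k) := by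
    have h := mte_even_pow (v - w) (v + w) n
    have e1 : v + w + (v - w) = 2 * v := by ring
    have e2 : v + w - (v - w) = 2 * w := by ring
    rw [e1, e2] at h
    rw [← h, mul_pow, mul_pow]; ring
  have key3 : ∀ k : ℕ, z ^ (2 * k) - (v - w) ^ (2 * k)
      = ∑ m ∈ Icc 1 k, (4 : A) ^ m * t ^ m * (k.choose m : A) * (v - w) ^ (2 * k - 2 * m) := by
    intro k
    have hz2 : z ^ 2 = 4 * t + (v - w) ^ 2 := by rw [hz, ht]; ring
    have hexp : z ^ (2 * k) = ∑ m ∈ range (k + 1),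
        (4 * t) ^ m * ((v - w) ^ 2) ^ (k - m) * (k.choose m : A) := by
      rw [pow_mul, hz2, add_pow]
    rw [hexp, sum_range_succ']
    simp only [pow_zero, one_mul, Nat.choose_zero_right, Nat.cast_one, mul_one, Nat.sub_zero]
    rw [← pow_mul]
    have hIcc : ∑ m ∈ Icc 1 k, (4 : A) ^ m * t ^ m * (k.choose m : A) * (v - w) ^ (2 * k - 2 * m)
        = ∑ m ∈ range k, (4 : A) ^ (m + 1) * t ^ (m + 1) * (k.choose (m + 1) : A)
            * (v - w) ^ (2 * k - 2 * (m + 1)) := by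
      rw [← Finset.Ico_add_one_right_eq_Icc, sum_Ico_eq_sum_range]
      have hk : k + 1 - 1 = k := by omega
      rw [hk]
      exact sum_congr rfl fun m _ => by rw [add_comm 1 m]
    rw [hIcc, add_sub_cancel_right]
    refine sum_congr rfl fun m hm => ?_
    have hmk : m + 1 ≤ k := Nat.succ_le_of_lt (mem_range.mp hm)
    rw [← pow_mul, mul_pow]
    have h2 : 2 * (k - (m + 1)) = 2 * k - 2 * (m + 1) := by omega
    rw [h2]; ring
  calc (2 : A) ^ (2 * n) * ((u - v - w) ^ (2 * n) + u ^ (2 * n) - v ^ (2 * n) - w ^ (2 * n))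
      = (2 : A) ^ (2 * n) * ((u - v - w) ^ (2 * n) + u ^ (2 * n))
        - (2 : A) ^ (2 * n) * (v ^ (2 * n) + w ^ (2 * n)) := by ring
    _ = 2 * ∑ k ∈ range (n + 1), ((2 * n).choose (2 * k) : A)
          * (z ^ (2 * k) - (v - w) ^ (2 * k)) * (v + w) ^ (2 * n - 2 * k) := by
        rw [key1, key2, ← mul_sub, ← sum_sub_distrib]
        congr 1
        exact sum_congr rfl fun k _ => by ring
    _ = ∑ k ∈ range (n + 1), ∑ m ∈ Icc 1 k,
          2 * (4 : A) ^ m * t ^ m * (((2 * n).choose (2 * k) : A) * (k.choose m : A)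
            * (v - w) ^ (2 * k - 2 * m) * (v + w) ^ (2 * n - 2 * k)) := by
        rw [mul_sum]
        refine sum_congr rfl fun k _ => ?_
        rw [key3 k, mul_sum, sum_mul, mul_sum]
        exact sum_congr rfl fun m _ => by ring
    _ = ∑ m ∈ Icc 1 n, ∑ k ∈ Icc m n,
          2 * (4 : A) ^ m * t ^ m * (((2 * n).choose (2 * k) : A) * (k.choose m : A)
            * (v - w) ^ (2 * k - 2 * m) * (v + w) ^ (2 * n - 2 * k)) := by
        refine sum_comm' fun k m => ?_
        simp only [mem_range, mem_Icc]
        omega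
    _ = (2 : A) ^ (2 * n) * ∑ m ∈ Icc 1 n,
          (2 * (⅟(2 : A)) ^ (2 * (n - m))) * t ^ m *
            ∑ k ∈ Icc m n, ((2 * n).choose (2 * k) : A) * (k.choose m : A) *
              (v - w) ^ (2 * k - 2 * m) * (v + w) ^ (2 * n - 2 * k) := by
        rw [mul_sum]
        refine sum_congr rfl fun m hm => ?_
        have hmn : m ≤ n := (mem_Icc.mp hm).2
        have hpow : (2 : A) ^ (2 * n) * (2 * (⅟(2 : A)) ^ (2 * (n - m))) = 2 * 4 ^ m := by
          have h2n : 2 * n = 2 * m + 2 * (n - m) := by omega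
          calc (2 : A) ^ (2 * n) * (2 * (⅟(2 : A)) ^ (2 * (n - m)))
              = 2 * (2 : A) ^ (2 * m)
                * ((2 : A) ^ (2 * (n - m)) * (⅟(2 : A)) ^ (2 * (n - m))) := by
                rw [h2n, pow_add]; ring
            _ = 2 * 4 ^ m := by
                rw [← mul_pow, mul_invOf_self, one_pow, mul_one, pow_mul]
                norm_num
        have hterm : (2 : A) ^ (2 * n) * ((2 * (⅟(2 : A)) ^ (2 * (n - m))) * t ^ m *
            ∑ k ∈ Icc m n, ((2 * n).choose (2 * k) : A) * (k.choose m : A) *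
              (v - w) ^ (2 * k - 2 * m) * (v + w) ^ (2 * n - 2 * k))
            = (2 * (4 : A) ^ m * t ^ m) *
            ∑ k ∈ Icc m n, ((2 * n).choose (2 * k) : A) * (k.choose m : A) *
              (v - w) ^ (2 * k - 2 * m) * (v + w) ^ (2 * n - 2 * k) := by
          rw [← hpow]; ring
        rw [hterm, mul_sum]
end
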